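/- There exists ν₊ > 0 such that for all ν ∈ (0, ν₊] and all θ ∈ [ν, ν₊], writing θ' := max(θ/2, ν) and G_ν = (f, g, h), every point (x, y, z) ∈ S_θ \ S_{θ'} satisfies the sign conditions: if √(2θ') ≤ |x| ≤ √(2θ) then f(x, y, z) has sign opposite to x; if θ'^{3/2} ≤ |z| ≤ θ^{3/2} then h(x, y, z) has sign opposite to z; and if θ'^{3/2} ≤ |y| ≤ θ^{3/2} then g(x, y, z) has the same sign as y. -/
import Mathlib


open Set

/-- The vector field in `ℝ³`:
`G_ν(x,y,z) = (x(ν − x²) + x³(y+z) + x(y²+z²) + yz, y + x²(y+z) + x⁴ + yz, −z + x²(y+z) + x⁴ + yz)`. -/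
noncomputable def G (ν : ℝ) (p : ℝ × ℝ × ℝ) : ℝ × ℝ × ℝ :=
  (p.1 * (ν - p.1 ^ 2) + p.1 ^ 3 * (p.2.1 + p.2.2) + p.1 * (p.2.1 ^ 2 + p.2.2 ^ 2)
      + p.2.1 * p.2.2,
   p.2.1 + p.1 ^ 2 * (p.2.1 + p.2.2) + p.1 ^ 4 + p.2.1 * p.2.2,
   -p.2.2 + p.1 ^ 2 * (p.2.1 + p.2.2) + p.1 ^ 4 + p.2.1 * p.2.2)

/-- The box `S_θ = [−√(2θ), √(2θ)] × [−θ^{3/2}, θ^{3/2}] × [−θ^{3/2}, θ^{3/2}]`. -/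
noncomputable def S (θ : ℝ) : Set (ℝ × ℝ × ℝ) :=
  Icc (-Real.sqrt (2 * θ)) (Real.sqrt (2 * θ)) ×ˢ
    (Icc (-θ ^ ((3 : ℝ) / 2)) (θ ^ ((3 : ℝ) / 2)) ×ˢ
      Icc (-θ ^ ((3 : ℝ) / 2)) (θ ^ ((3 : ℝ) / 2)))

set_option maxHeartbeats 800000 in
/-- Sign conditions of `G_ν = (f, g, h)` on `S_θ \ S_{θ'}` with `θ' = max(θ/2, ν)`:
there exists `ν₊ > 0` such that for all `ν ∈ (0, ν₊]`, `θ ∈ [ν, ν₊]` and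
`(x, y, z) ∈ S_θ \ S_{θ'}`: if `√(2θ') ≤ |x| ≤ √(2θ)` then `f` has sign opposite to
`x`; if `θ'^{3/2} ≤ |z| ≤ θ^{3/2}` then `h` has sign opposite to `z`; and if
`θ'^{3/2} ≤ |y| ≤ θ^{3/2}` then `g` has the same sign as `y`. -/
theorem stmt19 :
    ∃ νp : ℝ, 0 < νp ∧ ∀ ν ∈ Ioc (0 : ℝ) νp, ∀ θ ∈ Icc ν νp,
      ∀ p ∈ S θ \ S (max (θ / 2) ν),
        (Real.sqrt (2 * max (θ / 2) ν) ≤ |p.1| → |p.1| ≤ Real.sqrt (2 * θ) →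
          (G ν p).1 * p.1 < 0) ∧
        ((max (θ / 2) ν) ^ ((3 : ℝ) / 2) ≤ |p.2.2| → |p.2.2| ≤ θ ^ ((3 : ℝ) / 2) →
          (G ν p).2.2 * p.2.2 < 0) ∧
        ((max (θ / 2) ν) ^ ((3 : ℝ) / 2) ≤ |p.2.1| → |p.2.1| ≤ θ ^ ((3 : ℝ) / 2) →
          0 < (G ν p).2.1 * p.2.1) := by
  refine ⟨1/10000, by norm_num, ?_⟩
  rintro ν ⟨hν0, hν1⟩ θ ⟨hθν, hθ1⟩ ⟨x, y, z⟩ ⟨hpS, -⟩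
  have hθ0 : 0 < θ := lt_of_lt_of_le hν0 hθν
  simp only [S, Set.mem_prod, Set.mem_Icc] at hpS
  obtain ⟨⟨hx1, hx2⟩, ⟨hy1, hy2⟩, ⟨hz1, hz2⟩⟩ := hpS
  set t := θ ^ ((3:ℝ)/2) with ht_def
  set θ' := max (θ/2) ν with hθ'_def
  set t' := θ' ^ ((3:ℝ)/2) with ht'_def
  have hθ'1 : θ/2 ≤ θ' := le_max_left _ _
  have hθ'2 : ν ≤ θ' := le_max_right _ _
  have hθ'0 : 0 < θ' := lt_of_lt_of_le hν0 hθ'2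
  have hθ'θ : θ' ≤ θ := max_le (by linarith) hθν
  have ht0 : 0 < t := Real.rpow_pos_of_pos hθ0 _
  have ht'0 : 0 < t' := Real.rpow_pos_of_pos hθ'0 _
  have htsq : t^2 = θ^3 := by
    rw [ht_def, ← Real.rpow_natCast (θ ^ ((3:ℝ)/2)) 2, ← Real.rpow_mul hθ0.le,
        ← Real.rpow_natCast θ 3]
    norm_num
  have htθ : t ≤ θ := by
    calc t = θ ^ ((3:ℝ)/2) := rfl
    _ ≤ θ ^ (1:ℝ) := Real.rpow_le_rpow_of_exponent_ge hθ0 (by linarith) (by norm_num)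
    _ = θ := Real.rpow_one θ
  have ht't : t' ≤ t := Real.rpow_le_rpow hθ'0.le hθ'θ (by norm_num)
  have h23 : (2:ℝ) ^ ((3:ℝ)/2) ≤ 3 := by
    have h8 : ((2:ℝ) ^ ((3:ℝ)/2))^2 = 8 := by
      rw [← Real.rpow_natCast ((2:ℝ) ^ ((3:ℝ)/2)) 2, ← Real.rpow_mul (by norm_num)]
      norm_num
    nlinarith [Real.rpow_pos_of_pos (show (0:ℝ)<2 by norm_num) ((3:ℝ)/2)]
  have ht'3 : t/3 ≤ t' := by
    have h1 : (θ/2) ^ ((3:ℝ)/2) ≤ t' := Real.rpow_le_rpow (by linarith) hθ'1 (by norm_num)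
    have h2 : (θ/2) ^ ((3:ℝ)/2) = t / (2:ℝ)^((3:ℝ)/2) := Real.div_rpow hθ0.le (by norm_num) _
    have h3 : t / 3 ≤ t / (2:ℝ)^((3:ℝ)/2) :=
      div_le_div_of_nonneg_left ht0.le (by positivity) h23
    linarith
  have h9t' : 9*θ^2 < t' := by
    have h1 : (27*θ^2)^2 < t^2 := by rw [htsq]; nlinarith
    have h27 : 27*θ^2 < t := by nlinarith
    linarith
  have hx2u : x^2 ≤ 2*θ := by
    have hs : Real.sqrt (2*θ)^2 = 2*θ := Real.sq_sqrt (by linarith)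
    have hax : |x| ≤ Real.sqrt (2*θ) := abs_le.mpr ⟨hx1, hx2⟩
    calc x^2 = |x|^2 := (sq_abs x).symm
    _ ≤ Real.sqrt (2*θ)^2 := pow_le_pow_left₀ (abs_nonneg x) hax 2
    _ = 2*θ := hs
  have hysq : y^2 ≤ θ^3 := by rw [← htsq]; exact sq_le_sq' hy1 hy2
  have hzsq : z^2 ≤ θ^3 := by rw [← htsq]; exact sq_le_sq' hz1 hz2
  have hθ32 : θ^3 ≤ θ^2 := by
    have h := mul_le_mul_of_nonneg_left (show θ ≤ (1:ℝ) by linarith) (sq_nonneg θ)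
    calc θ^3 = θ^2*θ := by ring
    _ ≤ θ^2*1 := h
    _ = θ^2 := by ring
  have hx4 : x^4 ≤ 4*θ^2 := by
    have h := pow_le_pow_left₀ (sq_nonneg x) hx2u 2
    calc x^4 = (x^2)^2 := by ring
    _ ≤ (2*θ)^2 := h
    _ = 4*θ^2 := by ring
  have hθt : θ*t ≤ θ*θ := mul_le_mul_of_nonneg_left htθ hθ0.le
  have hEA : x^2*(y+z) ≤ 4*θ^2 := by
    linarith [mul_nonneg (sq_nonneg x) (show (0:ℝ) ≤ 2*t - (y+z) by linarith),
      mul_nonneg (show (0:ℝ) ≤ 2*θ - x^2 by linarith) ht0.le, hθt]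
  have hEA' : -(4*θ^2) ≤ x^2*(y+z) := by
    linarith [mul_nonneg (sq_nonneg x) (show (0:ℝ) ≤ (y+z) + 2*t by linarith),
      mul_nonneg (show (0:ℝ) ≤ 2*θ - x^2 by linarith) ht0.le, hθt]
  have hayz : |y*z| ≤ θ^3 := by
    calc |y * z| = |y| * |z| := abs_mul y z
    _ ≤ t*t := mul_le_mul (abs_le.mpr ⟨hy1,hy2⟩) (abs_le.mpr ⟨hz1,hz2⟩) (abs_nonneg z) ht0.le
    _ = t^2 := (sq t).symm
    _ = θ^3 := htsq
  have hyzub : y*z ≤ θ^3 := le_trans (le_abs_self _) hayz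
  have hyzlb : -(θ^3) ≤ y*z := by linarith [neg_abs_le (y*z)]
  have hx40 : (0:ℝ) ≤ x^4 := by positivity
  have hEub : x^2*(y+z) + x^4 + y*z ≤ 9*θ^2 := by linarith
  have hElb : -(9*θ^2) ≤ x^2*(y+z) + x^4 + y*z := by linarith
  have hE : |x^2*(y+z) + x^4 + y*z| ≤ 9*θ^2 := abs_le.mpr ⟨hElb, hEub⟩
  refine ⟨?_, ?_, ?_⟩
  · -- f component
    intro h1 _
    have hx2l : 2*θ' ≤ x^2 := by
      have h := pow_le_pow_left₀ (Real.sqrt_nonneg (2*θ')) h1 2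
      rwa [Real.sq_sqrt (by linarith), sq_abs] at h
    have hxθ : θ ≤ x^2 := by linarith
    have hxν : 2*ν ≤ x^2 := by linarith
    simp only [G]
    have hA : x^2*(ν - x^2) ≤ -(θ^2)/2 := by
      linarith [mul_nonneg (show (0:ℝ) ≤ x^2 - 2*ν by linarith) (sq_nonneg x),
        mul_nonneg (show (0:ℝ) ≤ x^2 - θ by linarith) (show (0:ℝ) ≤ x^2 + θ by positivity)]
    have hθ2t : θ^2*t ≤ θ^2*θ := mul_le_mul_of_nonneg_left htθ (sq_nonneg θ)
    have hB : x^4*(y+z) ≤ 8*θ^3 := by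
      linarith [mul_nonneg (show (0:ℝ) ≤ x^4 by positivity) (show (0:ℝ) ≤ 2*t - (y+z) by linarith),
        mul_nonneg (show (0:ℝ) ≤ 4*θ^2 - x^4 by linarith) ht0.le, hθ2t]
    have hC : x^2*(y^2+z^2) ≤ 4*θ^4 := by
      linarith [mul_nonneg (sq_nonneg x) (show (0:ℝ) ≤ 2*θ^3 - (y^2+z^2) by linarith),
        mul_nonneg (show (0:ℝ) ≤ 2*θ - x^2 by linarith) (show (0:ℝ) ≤ 2*θ^3 by positivity)]
    have hθ4 : θ^4 ≤ θ^3 := by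
      calc θ^4 = θ^3*θ := by ring
      _ ≤ θ^3*1 := mul_le_mul_of_nonneg_left (show θ ≤ (1:ℝ) by linarith) (by positivity)
      _ = θ^3 := by ring
    have hD : x*y*z ≤ 2*θ^3 := by
      linarith [sq_nonneg (x*y - z), mul_nonneg (show (0:ℝ) ≤ 2*θ - x^2 by linarith) (sq_nonneg y),
        mul_le_mul_of_nonneg_left hysq (show (0:ℝ) ≤ 2*θ by linarith), hθ4, hzsq]
    have hsmall : 10*θ^3 + 4*θ^4 < θ^2/2 := by
      have e1 : θ^3 ≤ θ^2*(1/10000) := by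
        calc θ^3 = θ^2*θ := by ring
        _ ≤ θ^2*(1/10000) := mul_le_mul_of_nonneg_left hθ1 (sq_nonneg θ)
      have e2 : (0:ℝ) < θ^2 := by positivity
      linarith [hθ4]
    linarith [hA, hB, hC, hD, hsmall]
  · -- h component
    intro h1 _
    have hzpos : 0 < |z| := lt_of_lt_of_le ht'0 h1
    simp only [G]
    have key : (x^2*(y+z) + x^4 + y*z) * z ≤ 9*θ^2 * |z| := by
      calc (x^2*(y+z) + x^4 + y*z) * z ≤ |(x^2*(y+z) + x^4 + y*z) * z| := le_abs_self _
      _ = |x^2*(y+z) + x^4 + y*z| * |z| := abs_mul _ _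
      _ ≤ 9*θ^2 * |z| := mul_le_mul_of_nonneg_right hE (abs_nonneg z)
    have hz2' : t' * |z| ≤ |z| * |z| := mul_le_mul_of_nonneg_right h1 (abs_nonneg z)
    have hsq : |z| * |z| = z^2 := by rw [← sq_abs z]; ring
    linarith [key, mul_pos hzpos (show (0:ℝ) < t' - 9*θ^2 by linarith), hz2', hsq]
  · -- g component
    intro h1 _
    have hypos : 0 < |y| := lt_of_lt_of_le ht'0 h1
    simp only [G]
    have key : -(9*θ^2 * |y|) ≤ (x^2*(y+z) + x^4 + y*z) * y := by
      have h2 : -|(x^2*(y+z) + x^4 + y*z) * y| ≤ (x^2*(y+z) + x^4 + y*z) * y := neg_abs_le _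
      have h3 : |(x^2*(y+z) + x^4 + y*z) * y| = |x^2*(y+z) + x^4 + y*z| * |y| := abs_mul _ _
      have h4 : |x^2*(y+z) + x^4 + y*z| * |y| ≤ 9*θ^2 * |y| :=
        mul_le_mul_of_nonneg_right hE (abs_nonneg y)
      linarith [h2, h3 ▸ h2]
    have hy2' : t' * |y| ≤ |y| * |y| := mul_le_mul_of_nonneg_right h1 (abs_nonneg y)
    have hsq : |y| * |y| = y^2 := by rw [← sq_abs y]; ring
    linarith [key, mul_pos hypos (show (0:ℝ) < t' - 9*θ^2 by linarith), hy2', hsq]
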